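/- arXiv:2208.00480 — 6 statements merged into one kernel-verified Lean document; each statement's English description precedes it below -/
import Mathlib

section
/- Let F ∈ Matrix (Fin dY) (Fin dX) ℂ have operator norm ‖F‖ = 1, and let φ ∈ ℂ^dX be a unit vector with ‖F φ‖ = 1. Set ζ := F φ and define the repeater vacuum interference operator G := φ ζ† ∈ Matrix (Fin dX) (Fin dY) ℂ (the rank-one operator |φ⟩⟨ζ|). Then for every n ∈ ℕ, (F · (G · F)^n) φ = ζ; in particular the effective vacuum interference operator F · (G · F)^n has operator norm exactly 1 for every n. -/
open Matrix
open scoped Matrix.Norms.L2Operator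

lemma toEuclideanLin_mul_apply {a b c : ℕ} (A : Matrix (Fin a) (Fin b) ℂ)
    (B : Matrix (Fin b) (Fin c) ℂ) (v : EuclideanSpace ℂ (Fin c)) :
    toEuclideanLin (A * B) v = toEuclideanLin A (toEuclideanLin B v) := by
  simp [toEuclideanLin_apply, mulVec_mulVec]

/-- direction 2 ⟹ 1 of Theorem 1 of the paper.
If `‖F‖ = 1` and `φ` is a unit vector with `‖F φ‖ = 1`, setting `ζ := F φ` and taking the
repeater vacuum interference operator `G := |φ⟩⟨ζ|`, the effective vacuum interference
operator `F * (G * F) ^ n` maps `φ` to `ζ` for every `n`, and in particular has operator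
norm exactly `1` for every `n`. -/
theorem repeater_preserves_unit_singular_value
    {dX dY : ℕ} (F : Matrix (Fin dY) (Fin dX) ℂ)
    (φ : EuclideanSpace ℂ (Fin dX))
    (hF : ‖F‖ = 1) (hφ : ‖φ‖ = 1)
    (hFφ : ‖toEuclideanLin F φ‖ = 1)
    (ζ : EuclideanSpace ℂ (Fin dY)) (hζ : ζ = toEuclideanLin F φ)
    (G : Matrix (Fin dX) (Fin dY) ℂ)
    (hG : G = vecMulVec (φ : Fin dX → ℂ) (star (ζ : Fin dY → ℂ))) :
    ∀ n : ℕ,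
      toEuclideanLin (F * (G * F) ^ n) φ = ζ ∧ ‖F * (G * F) ^ n‖ = 1 := by
  have hζn : ‖ζ‖ = 1 := by rw [hζ]; exact hFφ
  -- G acts as x ↦ ⟪ζ, x⟫ • φ
  have hGx : ∀ x : EuclideanSpace ℂ (Fin dY),
      toEuclideanLin G x = (inner ℂ ζ x : ℂ) • φ := by
    intro x
    apply PiLp.ext
    intro i
    simp only [toEuclideanLin_apply, hG, PiLp.smul_apply, smul_eq_mul,
      PiLp.inner_apply, RCLike.inner_apply]
    simp [vecMulVec, mulVec, dotProduct, Finset.mul_sum, mul_comm, mul_left_comm]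
  -- G maps ζ to φ
  have hGζ : toEuclideanLin G ζ = φ := by
    rw [hGx]
    have : (inner ℂ ζ ζ : ℂ) = 1 := by
      rw [inner_self_eq_norm_sq_to_K, hζn]; norm_num
    rw [this, one_smul]
  -- ‖G‖ ≤ 1
  have hGnorm : ‖G‖ ≤ 1 := by
    rw [Matrix.l2_opNorm_def]
    apply ContinuousLinearMap.opNorm_le_bound _ zero_le_one
    intro x
    have : (Matrix.toEuclideanLin.trans LinearMap.toContinuousLinearMap G) x
        = toEuclideanLin G x := rfl
    rw [this, hGx, one_mul, norm_smul, hφ, mul_one]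
    calc ‖(inner ℂ ζ x : ℂ)‖ ≤ ‖ζ‖ * ‖x‖ := norm_inner_le_norm ζ x
      _ = ‖x‖ := by rw [hζn, one_mul]
  -- map statement
  have hmap : ∀ n : ℕ, toEuclideanLin (F * (G * F) ^ n) φ = ζ := by
    intro n
    induction n with
    | zero => simp [hζ]
    | succ n ih =>
      have hfac : F * (G * F) ^ (n + 1) = (F * G) * (F * (G * F) ^ n) := by
        rw [pow_succ']; simp only [← Matrix.mul_assoc]
      rw [hfac, toEuclideanLin_mul_apply, ih, toEuclideanLin_mul_apply, hGζ, ← hζ]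
  -- norm ≤ 1
  have hle : ∀ n : ℕ, ‖F * (G * F) ^ n‖ ≤ 1 := by
    intro n
    induction n with
    | zero => simp [hF]
    | succ n ih =>
      have hfac : F * (G * F) ^ (n + 1) = (F * G) * (F * (G * F) ^ n) := by
        rw [pow_succ']; simp only [← Matrix.mul_assoc]
      rw [hfac]
      calc ‖(F * G) * (F * (G * F) ^ n)‖ ≤ ‖F * G‖ * ‖F * (G * F) ^ n‖ :=
            Matrix.l2_opNorm_mul _ _
        _ ≤ (‖F‖ * ‖G‖) * 1 := by
            apply mul_le_mul (Matrix.l2_opNorm_mul _ _) ih (norm_nonneg _)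
            positivity
        _ ≤ 1 := by rw [hF, one_mul, mul_one]; exact hGnorm
  intro n
  refine ⟨hmap n, le_antisymm (hle n) ?_⟩
  -- norm ≥ 1 since the unit vector φ maps to the unit vector ζ
  have h1 := Matrix.l2_opNorm_mulVec (F * (G * F) ^ n) φ
  have h2 : toEuclideanLin (F * (G * F) ^ n) φ
      = (EuclideanSpace.equiv (Fin dY) ℂ).symm ((F * (G * F) ^ n) *ᵥ φ) := rfl
  rw [← h2, hmap n, hζn, hφ, mul_one] at h1
  exact h1
end

section
/- Let {E¹_i}_{i∈I} and {E²_j}_{j∈J} be matrices in Matrix (Fin d) (Fin d) ℂ with ∑_i (E¹_i)† E¹_i = 1 and ∑_j (E²_j)† E²_j = 1, and let {α¹_i},{α²_j} be complex numbers with ∑_i |α¹_i|² = 1 and ∑_j |α²_j|² = 1. Then the Kraus operators S_{ij} := (α²_j • E¹_i) ⊗ₖ |0⟩⟨0| + (α¹_i • E²_j) ⊗ₖ |1⟩⟨1| on ℂ^d ⊗ ℂ² satisfy the completeness relation ∑_{i,j} S_{ij}† S_{ij} = 1 ⊗ₖ 1. -/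
open Matrix Kronecker

noncomputable def ketbra00 : Matrix (Fin 2) (Fin 2) ℂ := !![1, 0; 0, 0]
noncomputable def ketbra11 : Matrix (Fin 2) (Fin 2) ℂ := !![0, 0; 0, 1]

lemma sum_kron {m n p q : Type*} {I : Type*} (s : Finset I)
    (A : I → Matrix m n ℂ) (B : Matrix p q ℂ) :
    ∑ i ∈ s, (A i) ⊗ₖ B = (∑ i ∈ s, A i) ⊗ₖ B := by
  ext ⟨a, b⟩ ⟨c, e⟩
  simp [Matrix.kroneckerMap_apply, Matrix.sum_apply, Finset.sum_mul]

lemma kron_conjT {l m n p : Type*} (A : Matrix l m ℂ) (B : Matrix n p ℂ) :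
    (A ⊗ₖ B)ᴴ = Aᴴ ⊗ₖ Bᴴ := by
  ext ⟨i, j⟩ ⟨k, l⟩
  simp [conjTranspose_apply, Matrix.kroneckerMap_apply, mul_comm]

lemma h00 : ketbra00ᴴ * ketbra00 = ketbra00 := by
  ext i j; fin_cases i <;> fin_cases j <;>
    simp [ketbra00, Matrix.mul_apply, Fin.sum_univ_two]

lemma h11 : ketbra11ᴴ * ketbra11 = ketbra11 := by
  ext i j; fin_cases i <;> fin_cases j <;>
    simp [ketbra11, Matrix.mul_apply, Fin.sum_univ_two]

lemma h01 : ketbra00ᴴ * ketbra11 = 0 := by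
  ext i j; fin_cases i <;> fin_cases j <;>
    simp [ketbra00, ketbra11, Matrix.mul_apply, Fin.sum_univ_two]

lemma h10 : ketbra11ᴴ * ketbra00 = 0 := by
  ext i j; fin_cases i <;> fin_cases j <;>
    simp [ketbra00, ketbra11, Matrix.mul_apply, Fin.sum_univ_two]

lemma hsum01 : ketbra00 + ketbra11 = 1 := by
  ext i j; fin_cases i <;> fin_cases j <;>
    simp [ketbra00, ketbra11, Matrix.one_apply]

/-- The Kraus operators `S i j = (α₂ j • E₁ i) ⊗ₖ |0⟩⟨0| + (α₁ i • E₂ j) ⊗ₖ |1⟩⟨1|`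
of the superposition of two channels (Eq. (2) of the paper) satisfy the completeness
relation `∑ i j, (S i j)ᴴ * S i j = 1 ⊗ₖ 1`, provided that `{E₁ i}` and `{E₂ j}` satisfy the
Kraus completeness relations and the vacuum amplitudes are normalised. -/
theorem superposition_kraus_complete
    {d : ℕ} {I J : Type*} [Fintype I] [Fintype J]
    (E₁ : I → Matrix (Fin d) (Fin d) ℂ) (E₂ : J → Matrix (Fin d) (Fin d) ℂ)
    (α₁ : I → ℂ) (α₂ : J → ℂ)
    (hE₁ : ∑ i, (E₁ i)ᴴ * E₁ i = 1) (hE₂ : ∑ j, (E₂ j)ᴴ * E₂ j = 1)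
    (hα₁ : ∑ i, ‖α₁ i‖ ^ 2 = 1) (hα₂ : ∑ j, ‖α₂ j‖ ^ 2 = 1)
    (S : I → J → Matrix (Fin d × Fin 2) (Fin d × Fin 2) ℂ)
    (hS : ∀ i j, S i j = (α₂ j • E₁ i) ⊗ₖ ketbra00 + (α₁ i • E₂ j) ⊗ₖ ketbra11) :
    ∑ i, ∑ j, (S i j)ᴴ * S i j
      = (1 : Matrix (Fin d) (Fin d) ℂ) ⊗ₖ (1 : Matrix (Fin 2) (Fin 2) ℂ) := by
  have hnorm₁ : ∑ i, (starRingEnd ℂ (α₁ i) * α₁ i) = 1 := by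
    have : ∑ i, (starRingEnd ℂ (α₁ i) * α₁ i) = ((∑ i, ‖α₁ i‖ ^ 2 : ℝ) : ℂ) := by
      push_cast
      refine Finset.sum_congr rfl fun i _ => ?_
      rw [mul_comm, Complex.mul_conj']
    rw [this, hα₁]; norm_num
  have hnorm₂ : ∑ j, (starRingEnd ℂ (α₂ j) * α₂ j) = 1 := by
    have : ∑ j, (starRingEnd ℂ (α₂ j) * α₂ j) = ((∑ j, ‖α₂ j‖ ^ 2 : ℝ) : ℂ) := by
      push_cast
      refine Finset.sum_congr rfl fun j _ => ?_
      rw [mul_comm, Complex.mul_conj']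
    rw [this, hα₂]; norm_num
  have key : ∀ i j, (S i j)ᴴ * S i j
      = (starRingEnd ℂ (α₂ j) * α₂ j) • (((E₁ i)ᴴ * E₁ i) ⊗ₖ ketbra00)
        + (starRingEnd ℂ (α₁ i) * α₁ i) • (((E₂ j)ᴴ * E₂ j) ⊗ₖ ketbra11) := by
    intro i j
    rw [hS i j]
    simp only [Matrix.smul_kronecker, conjTranspose_add, conjTranspose_smul, kron_conjT,
      add_mul, mul_add, smul_mul_assoc, mul_smul_comm, smul_smul,
      h00, h11, h01, h10, Matrix.kronecker_zero, smul_zero, add_zero, zero_add,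
      Complex.star_def]
    simp only [← Matrix.mul_kronecker_mul, h00, h11, h01, h10, Matrix.kronecker_zero, smul_zero, add_zero, zero_add, smul_smul]
    module
  have t1 : ∑ i, ∑ j, (starRingEnd ℂ (α₂ j) * α₂ j) • (((E₁ i)ᴴ * E₁ i) ⊗ₖ ketbra00)
      = (1 : Matrix (Fin d) (Fin d) ℂ) ⊗ₖ ketbra00 := by
    simp_rw [← Finset.sum_smul, hnorm₂, one_smul, sum_kron, hE₁]
  have t2 : ∑ i, ∑ j, (starRingEnd ℂ (α₁ i) * α₁ i) • (((E₂ j)ᴴ * E₂ j) ⊗ₖ ketbra11)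
      = (1 : Matrix (Fin d) (Fin d) ℂ) ⊗ₖ ketbra11 := by
    simp_rw [← Finset.smul_sum, sum_kron, hE₂, ← Finset.sum_smul, hnorm₁, one_smul]
  simp_rw [key, Finset.sum_add_distrib, t1, t2, ← Matrix.kronecker_add, hsum01]
end

section
/- Fix p ∈ [0,1] and define the four Kraus operators on ℂ²: E_1 := √p·|0⟩⟨0|, E_2 := √p·|0⟩⟨1|, E_3 := √(1−p)·|0⟩⟨0|, E_4 := √(1−p)·|1⟩⟨1|, with vacuum amplitudes α_1 := √p, α_2 := 0, α_3 := √(1−p), α_4 := 0. Then: (i) ∑_{k=1}^4 E_k† E_k = 1 and ∑_{k=1}^4 |α_k|² = 1; (ii) for every ρ ∈ Matrix (Fin 2) (Fin 2) ℂ, ∑_{k=1}^4 E_k ρ E_k† = p·(trace ρ)·|0⟩⟨0| + (1−p)·(ρ₀₀|0⟩⟨0| + ρ₁₁|1⟩⟨1|), i.e. the channel is the Z-channel Z_p; and (iii) the vacuum interference operator F := ∑_{k=1}^4 conj(α_k)·E_k equals |0⟩⟨0|, whose largest eigenvalue is 1. -/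
open Matrix
open scoped ComplexConjugate

/-- `|0⟩⟨1|` on ℂ². -/
noncomputable def ketbra01 : Matrix (Fin 2) (Fin 2) ℂ := !![0, 1; 0, 0]
lemma ketbra00_hasEigenvalue_one :
    Module.End.HasEigenvalue (Matrix.toEuclideanLin ketbra00) 1 := by
  apply Module.End.hasEigenvalue_of_hasEigenvector (x := (WithLp.equiv 2 (Fin 2 → ℂ)).symm ![1, 0])
  constructor
  · rw [Module.End.mem_eigenspace_iff, WithLp.equiv_symm_apply, Matrix.toEuclideanLin_apply_piLp_toLp]
    ext i
    fin_cases i <;> simp [ketbra00, Matrix.mulVec, dotProduct, Fin.sum_univ_two]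
  · intro h
    have := congrFun (congrArg (WithLp.equiv 2 (Fin 2 → ℂ)) h) 0
    simp at this

lemma ketbra00_eigenvalue_le (μ : ℂ)
    (h : Module.End.HasEigenvalue (Matrix.toEuclideanLin ketbra00) μ) : ‖μ‖ ≤ 1 := by
  obtain ⟨v, hv⟩ := h.exists_hasEigenvector
  have heq := hv.apply_eq_smul
  have h0 := congrFun (congrArg (WithLp.equiv 2 (Fin 2 → ℂ)) heq) 0
  have h1 := congrFun (congrArg (WithLp.equiv 2 (Fin 2 → ℂ)) heq) 1
  rw [WithLp.equiv_apply, WithLp.equiv_apply, Matrix.piLp_ofLp_toEuclideanLin] at h0 h1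
  simp [ketbra00, Matrix.mulVec, dotProduct, Fin.sum_univ_two, WithLp.equiv,
    PiLp.smul_apply, smul_eq_mul, Equiv.refl_apply] at h0 h1
  change v 0 = μ * v 0 at h0
  replace h1 : (0:ℂ) = μ * v 1 := by rcases h1 with h | h <;> simp [h]
  by_cases hv1 : v 1 = 0
  · have hv0 : v 0 ≠ 0 := by
      intro hv0
      apply hv.2
      ext i
      fin_cases i <;> simp [hv0, hv1]
    have : μ = 1 := by
      have h2 : (μ - 1) * v 0 = 0 := by linear_combination -h0
      rcases mul_eq_zero.mp h2 with h | h
      · exact sub_eq_zero.mp h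
      · exact absurd h hv0
    simp [this]
  · have : μ = 0 := by
      rcases mul_eq_zero.mp h1.symm with h | h
      · exact h
      · exact absurd h hv1
    simp [this]

/-- the paper's physical realisation of the Z-channel.
The Kraus operators `E₁ = √p|0⟩⟨0|, E₂ = √p|0⟩⟨1|, E₃ = √(1−p)|0⟩⟨0|, E₄ = √(1−p)|1⟩⟨1|`
with vacuum amplitudes `α₁ = √p, α₂ = 0, α₃ = √(1−p), α₄ = 0` satisfy: (i) Kraus
completeness and amplitude normalisation; (ii) the channel is the Z-channel `Z_p`; and
(iii) the vacuum interference operator is `F = |0⟩⟨0|`, which has `1` as an eigenvalue,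
and every eigenvalue has modulus at most `1` (largest eigenvalue `1`). -/
theorem Z_channel_physical_realisation
    (p : ℝ) (hp0 : 0 ≤ p) (hp1 : p ≤ 1)
    (E₁ E₂ E₃ E₄ : Matrix (Fin 2) (Fin 2) ℂ)
    (hE₁ : E₁ = (Real.sqrt p : ℂ) • ketbra00)
    (hE₂ : E₂ = (Real.sqrt p : ℂ) • ketbra01)
    (hE₃ : E₃ = (Real.sqrt (1 - p) : ℂ) • ketbra00)
    (hE₄ : E₄ = (Real.sqrt (1 - p) : ℂ) • ketbra11)
    (α₁ α₂ α₃ α₄ : ℂ)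
    (hα₁ : α₁ = (Real.sqrt p : ℂ)) (hα₂ : α₂ = 0)
    (hα₃ : α₃ = (Real.sqrt (1 - p) : ℂ)) (hα₄ : α₄ = 0)
    (F : Matrix (Fin 2) (Fin 2) ℂ)
    (hF : F = conj α₁ • E₁ + conj α₂ • E₂ + conj α₃ • E₃ + conj α₄ • E₄) :
    (E₁ᴴ * E₁ + E₂ᴴ * E₂ + E₃ᴴ * E₃ + E₄ᴴ * E₄ = 1
        ∧ ‖α₁‖ ^ 2 + ‖α₂‖ ^ 2 + ‖α₃‖ ^ 2 + ‖α₄‖ ^ 2 = 1)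
    ∧ (∀ ρ : Matrix (Fin 2) (Fin 2) ℂ,
        E₁ * ρ * E₁ᴴ + E₂ * ρ * E₂ᴴ + E₃ * ρ * E₃ᴴ + E₄ * ρ * E₄ᴴ
          = (p : ℂ) • ρ.trace • ketbra00
            + ((1 : ℂ) - (p : ℂ)) • (ρ 0 0 • ketbra00 + ρ 1 1 • ketbra11))
    ∧ (F = ketbra00
        ∧ Module.End.HasEigenvalue (Matrix.toEuclideanLin F) 1
        ∧ ∀ μ : ℂ, Module.End.HasEigenvalue (Matrix.toEuclideanLin F) μ → ‖μ‖ ≤ 1) := by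
  have hq0 : (0:ℝ) ≤ 1 - p := by linarith
  have hp : ((Real.sqrt p : ℂ)) * (Real.sqrt p) = (p:ℂ) := by
    rw [← Complex.ofReal_mul, Real.mul_self_sqrt hp0]
  have hq : ((Real.sqrt (1-p) : ℂ)) * (Real.sqrt (1-p)) = ((1-p:ℝ):ℂ) := by
    rw [← Complex.ofReal_mul, Real.mul_self_sqrt hq0]
  subst hE₁ hE₂ hE₃ hE₄ hα₁ hα₂ hα₃ hα₄
  have hFk : F = ketbra00 := by
    subst hF
    ext i j
    fin_cases i <;> fin_cases j <;>
      simp [ketbra00, ketbra01, ketbra11, Complex.conj_ofReal, Matrix.smul_apply]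
    all_goals try (ring_nf; simp [sq, hp, hq, Complex.ofReal_sub]; try ring)
  refine ⟨⟨?_, ?_⟩, ?_, hFk, ?_, ?_⟩
  · ext i j
    fin_cases i <;> fin_cases j <;>
      simp [ketbra00, ketbra01, ketbra11, Matrix.mul_apply, Fin.sum_univ_two,
        Matrix.conjTranspose_apply, Matrix.one_apply, Complex.conj_ofReal, hp, hq]
  · simp [Complex.norm_real, abs_of_nonneg (Real.sqrt_nonneg _),
      Real.sq_sqrt hp0, Real.sq_sqrt hq0]
  · intro ρ
    rw [Matrix.eta_fin_two ρ]
    ext i j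
    fin_cases i <;> fin_cases j <;>
      simp [ketbra00, ketbra01, ketbra11, Matrix.mul_apply, Fin.sum_univ_two,
        Matrix.conjTranspose_apply, Matrix.trace_fin_two, Complex.conj_ofReal,
        Matrix.smul_apply, Matrix.vecMul, dotProduct]
    all_goals try (ring_nf; simp [sq, hp, hq, Complex.ofReal_sub]; try ring)
  · rw [hFk]; exact ketbra00_hasEigenvalue_one
  · rw [hFk]; exact ketbra00_eigenvalue_le
end

section
/- Fix p ∈ (0,1], let Z_p be the Z-channel on Matrix (Fin 2) (Fin 2) ℂ and F := |0⟩⟨0|. Let ρ be a 2×2 Hermitian matrix with trace 1. Then the sequence of matrices n ↦ ½(Z_p^n(ρ) + Fⁿρ(F†)ⁿ) ⊗ₖ |+⟩⟨+| + ½(Z_p^n(ρ) − Fⁿρ(F†)ⁿ) ⊗ₖ |−⟩⟨−| converges as n → ∞ to |0⟩⟨0| ⊗ₖ (q₊·|+⟩⟨+| + q₋·|−⟩⟨−|), where q₊ := (1 + ρ₀₀)/2 and q₋ := (1 − ρ₀₀)/2. -/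
open Matrix Kronecker Filter

/-- `|+⟩⟨+|` on ℂ². -/
noncomputable def ketbraPlus : Matrix (Fin 2) (Fin 2) ℂ := !![1/2, 1/2; 1/2, 1/2]
/-- `|−⟩⟨−|` on ℂ². -/
noncomputable def ketbraMinus : Matrix (Fin 2) (Fin 2) ℂ := !![1/2, -(1/2); -(1/2), 1/2]

/-- The quantum realisation of the Z-channel with error probability `p`. -/
noncomputable def ZChannel (p : ℝ) (ρ : Matrix (Fin 2) (Fin 2) ℂ) :
    Matrix (Fin 2) (Fin 2) ℂ :=
  (p : ℂ) • ρ.trace • ketbra00 + ((1 : ℂ) - (p : ℂ)) • (ρ 0 0 • ketbra00 + ρ 1 1 • ketbra11)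

lemma ketbra00_pow (n : ℕ) (hn : 1 ≤ n) : ketbra00 ^ n = ketbra00 := by
  induction n with
  | zero => omega
  | succ m ih =>
    rcases Nat.eq_zero_or_pos m with h | h
    · subst h; simp
    · rw [pow_succ, ih h]
      ext i j
      fin_cases i <;> fin_cases j <;>
        simp [ketbra00, Matrix.mul_apply, Fin.sum_univ_two]

lemma ketbra00_conjT : ketbra00ᴴ = ketbra00 := by
  ext i j
  fin_cases i <;> fin_cases j <;> simp [ketbra00]

lemma sub_kron (A B C : Matrix (Fin 2) (Fin 2) ℂ) :
    (A - B) ⊗ₖ C = A ⊗ₖ C - B ⊗ₖ C := by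
  ext i j
  simp [Matrix.kroneckerMap_apply, Matrix.sub_apply, sub_mul]

lemma Z_iter (p : ℝ) (ρ : Matrix (Fin 2) (Fin 2) ℂ) (htr : ρ.trace = 1) :
    ∀ n, 1 ≤ n → (ZChannel p)^[n] ρ
      = ketbra00 + ((((1:ℂ) - p) ^ n) * ρ 1 1) • (ketbra11 - ketbra00) := by
  have h00 : ρ 0 0 = 1 - ρ 1 1 := by
    rw [Matrix.trace_fin_two] at htr
    linear_combination htr
  intro n hn
  induction n with
  | zero => omega
  | succ m ih =>
    rcases Nat.eq_zero_or_pos m with h | h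
    · subst h
      simp only [zero_add, Function.iterate_one, ZChannel, htr, pow_one]
      ext i j
      fin_cases i <;> fin_cases j <;>
        · simp [ketbra00, ketbra11, h00, Matrix.add_apply, Matrix.sub_apply, Matrix.smul_apply]
          try ring
    · rw [Function.iterate_succ_apply', ih h]
      simp only [ZChannel]
      ext i j
      fin_cases i <;> fin_cases j <;>
        · simp [ketbra00, ketbra11, Matrix.trace_fin_two, Matrix.add_apply,
            Matrix.sub_apply, Matrix.smul_apply, pow_succ]
          try ring

/-- Eqs. (6) and (8) of the paper. For `p ∈ (0,1]`, `F = |0⟩⟨0|` and a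
Hermitian trace-one input `ρ`, the output of the superposition of two identical sequences
of `n` Z-channels converges, as `n → ∞`, to
`|0⟩⟨0| ⊗ₖ (q₊ |+⟩⟨+| + q₋ |−⟩⟨−|)` with `q± = (1 ± ρ₀₀)/2`. -/
theorem superposed_Z_sequences_limit
    (p : ℝ) (hp0 : 0 < p) (hp1 : p ≤ 1)
    (F : Matrix (Fin 2) (Fin 2) ℂ) (hF : F = ketbra00)
    (ρ : Matrix (Fin 2) (Fin 2) ℂ) (hHerm : ρ.IsHermitian) (htr : ρ.trace = 1) :
    Tendsto
      (fun n : ℕ =>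
        (1/2 : ℂ) • (((ZChannel p)^[n] ρ + F ^ n * ρ * (Fᴴ) ^ n) ⊗ₖ ketbraPlus)
          + (1/2 : ℂ) • (((ZChannel p)^[n] ρ - F ^ n * ρ * (Fᴴ) ^ n) ⊗ₖ ketbraMinus))
      atTop
      (nhds (ketbra00 ⊗ₖ
        ((((1 : ℂ) + ρ 0 0) / 2) • ketbraPlus + (((1 : ℂ) - ρ 0 0) / 2) • ketbraMinus))) := by
  subst hF
  have hFρF : ketbra00 * ρ * ketbra00 = ρ 0 0 • ketbra00 := by
    ext i j
    fin_cases i <;> fin_cases j <;>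
      simp [ketbra00, Matrix.mul_apply, Fin.sum_univ_two, Matrix.vecMul, dotProduct]
  set T : Matrix (Fin 2 × Fin 2) (Fin 2 × Fin 2) ℂ :=
    ketbra00 ⊗ₖ
      ((((1 : ℂ) + ρ 0 0) / 2) • ketbraPlus + (((1 : ℂ) - ρ 0 0) / 2) • ketbraMinus) with hT
  set M : Matrix (Fin 2 × Fin 2) (Fin 2 × Fin 2) ℂ :=
    ρ 1 1 • ((1/2 : ℂ) • ((ketbra11 - ketbra00) ⊗ₖ ketbraPlus)
      + (1/2 : ℂ) • ((ketbra11 - ketbra00) ⊗ₖ ketbraMinus)) with hM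
  have key : ∀ᶠ n in atTop, T + (((1:ℂ) - p) ^ n) • M
      = (1/2 : ℂ) • (((ZChannel p)^[n] ρ + ketbra00 ^ n * ρ * (ketbra00ᴴ) ^ n) ⊗ₖ ketbraPlus)
          + (1/2 : ℂ) • (((ZChannel p)^[n] ρ - ketbra00 ^ n * ρ * (ketbra00ᴴ) ^ n) ⊗ₖ ketbraMinus) := by
    filter_upwards [eventually_ge_atTop 1] with n hn
    rw [Z_iter p ρ htr n hn, ketbra00_conjT, ketbra00_pow n hn, hFρF]
    simp only [hT, hM, Matrix.add_kronecker, sub_kron, Matrix.smul_kronecker,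
      Matrix.kronecker_add, Matrix.kronecker_smul, smul_add, smul_sub, smul_smul]
    module
  have hnorm : ‖(1:ℂ) - (p:ℂ)‖ < 1 := by
    have h : ((1:ℂ) - (p:ℂ)) = ((1 - p : ℝ) : ℂ) := by push_cast; ring
    rw [h, Complex.norm_real, Real.norm_eq_abs, abs_of_nonneg (by linarith)]
    linarith
  have hlim : Tendsto (fun n : ℕ => T + (((1:ℂ) - p) ^ n) • M) atTop (nhds T) := by
    have h0 : Tendsto (fun n : ℕ => ((1:ℂ) - p) ^ n) atTop (nhds 0) :=
      tendsto_pow_atTop_nhds_zero_of_norm_lt_one hnorm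
    have h1 : Tendsto (fun n : ℕ => T + (((1:ℂ) - p) ^ n) • M) atTop (nhds (T + (0:ℂ) • M)) :=
      (tendsto_const_nhds : Tendsto (fun _ : ℕ => T) atTop (nhds T)).add (h0.smul_const M)
    simpa using h1
  exact hlim.congr' key
end

section
/- Fix p, q ≥ 0 with p + q ≤ 1 and define the Kraus operators on ℂ²: E_1 := √p·|0⟩⟨0|, E_2 := √p·|0⟩⟨1|, E_3 := √q·|1⟩⟨0|, E_4 := √q·|1⟩⟨1|, E_5 := 0, E_6 := √(1−p−q)·|0⟩⟨0|, E_7 := √(1−p−q)·|1⟩⟨1|, with vacuum amplitudes α_1 := √p, α_5 := √q, α_6 := √(1−p−q), and α_2 = α_3 = α_4 = α_7 := 0. Then: (i) ∑_k E_k† E_k = 1 and ∑_k |α_k|² = 1; (ii) ∑_k E_k ρ E_k† = B_{q,p}(ρ) for every ρ; and (iii) the vacuum interference operator F := ∑_k conj(α_k)·E_k equals (1−q)·|0⟩⟨0|, whose operator norm is 1−q. -/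
open Matrix
open scoped ComplexConjugate Matrix.Norms.L2Operator

/-- `|1⟩⟨0|` on ℂ². -/
noncomputable def ketbra10 : Matrix (Fin 2) (Fin 2) ℂ := !![0, 0; 1, 0]
lemma ketbra00_norm : ‖ketbra00‖ = 1 := by
  have h1 : ketbra00ᴴ * ketbra00 = ketbra00 := by
    ext i j; fin_cases i <;> fin_cases j <;>
      simp [ketbra00, Matrix.mul_apply, Fin.sum_univ_two]
  have h2 := Matrix.l2_opNorm_conjTranspose_mul_self ketbra00
  rw [h1] at h2
  have hne : ketbra00 ≠ 0 := by
    intro h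
    have := congrFun (congrFun h 0) 0
    simp [ketbra00] at this
  have hn : ‖ketbra00‖ ≠ 0 := norm_ne_zero_iff.mpr hne
  nth_rewrite 1 [← mul_one ‖ketbra00‖] at h2
  exact (mul_left_cancel₀ hn h2).symm

set_option maxRecDepth 8000 in
/-- Eq. (14) of the paper: the physical realisation of the binary
asymmetric channel. The listed Kraus operators and vacuum amplitudes satisfy (i) Kraus
completeness and amplitude normalisation, (ii) realise the binary asymmetric channel
`B_{q,p}`, and (iii) have vacuum interference operator `F = (1−q)|0⟩⟨0|`, whose operator
norm is `1 − q`. -/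
theorem binary_asymmetric_physical_realisation
    (p q : ℝ) (hp : 0 ≤ p) (hq : 0 ≤ q) (hpq : p + q ≤ 1)
    (E₁ E₂ E₃ E₄ E₅ E₆ E₇ : Matrix (Fin 2) (Fin 2) ℂ)
    (hE₁ : E₁ = (Real.sqrt p : ℂ) • ketbra00)
    (hE₂ : E₂ = (Real.sqrt p : ℂ) • ketbra01)
    (hE₃ : E₃ = (Real.sqrt q : ℂ) • ketbra10)
    (hE₄ : E₄ = (Real.sqrt q : ℂ) • ketbra11)
    (hE₅ : E₅ = 0)
    (hE₆ : E₆ = (Real.sqrt (1 - p - q) : ℂ) • ketbra00)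
    (hE₇ : E₇ = (Real.sqrt (1 - p - q) : ℂ) • ketbra11)
    (α₁ α₂ α₃ α₄ α₅ α₆ α₇ : ℂ)
    (hα₁ : α₁ = (Real.sqrt p : ℂ)) (hα₂ : α₂ = 0) (hα₃ : α₃ = 0) (hα₄ : α₄ = 0)
    (hα₅ : α₅ = (Real.sqrt q : ℂ)) (hα₆ : α₆ = (Real.sqrt (1 - p - q) : ℂ)) (hα₇ : α₇ = 0)
    (F : Matrix (Fin 2) (Fin 2) ℂ)
    (hF : F = conj α₁ • E₁ + conj α₂ • E₂ + conj α₃ • E₃ + conj α₄ • E₄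
      + conj α₅ • E₅ + conj α₆ • E₆ + conj α₇ • E₇) :
    (E₁ᴴ * E₁ + E₂ᴴ * E₂ + E₃ᴴ * E₃ + E₄ᴴ * E₄ + E₅ᴴ * E₅ + E₆ᴴ * E₆ + E₇ᴴ * E₇ = 1
        ∧ ‖α₁‖ ^ 2 + ‖α₂‖ ^ 2 + ‖α₃‖ ^ 2 + ‖α₄‖ ^ 2 + ‖α₅‖ ^ 2 + ‖α₆‖ ^ 2 + ‖α₇‖ ^ 2 = 1)
    ∧ (∀ ρ : Matrix (Fin 2) (Fin 2) ℂ,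
        E₁ * ρ * E₁ᴴ + E₂ * ρ * E₂ᴴ + E₃ * ρ * E₃ᴴ + E₄ * ρ * E₄ᴴ
            + E₅ * ρ * E₅ᴴ + E₆ * ρ * E₆ᴴ + E₇ * ρ * E₇ᴴ
          = ((((1 : ℂ) - (q : ℂ)) * ρ 0 0 + (p : ℂ) * ρ 1 1) • ketbra00)
            + (((q : ℂ) * ρ 0 0 + ((1 : ℂ) - (p : ℂ)) * ρ 1 1) • ketbra11))
    ∧ (F = ((1 : ℂ) - (q : ℂ)) • ketbra00 ∧ ‖F‖ = 1 - q) := by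
  have h1 : (0:ℝ) ≤ 1 - p - q := by linarith
  have sp : Real.sqrt p * Real.sqrt p = p := Real.mul_self_sqrt hp
  have sq : Real.sqrt q * Real.sqrt q = q := Real.mul_self_sqrt hq
  have s1 : Real.sqrt (1 - p - q) * Real.sqrt (1 - p - q) = 1 - p - q :=
    Real.mul_self_sqrt h1
  have cp : (Real.sqrt p : ℂ) * (Real.sqrt p : ℂ) = (p : ℂ) := by norm_cast
  have cq : (Real.sqrt q : ℂ) * (Real.sqrt q : ℂ) = (q : ℂ) := by norm_cast
  have c1 : (Real.sqrt (1 - p - q) : ℂ) * (Real.sqrt (1 - p - q) : ℂ)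
      = (1 : ℂ) - (p : ℂ) - (q : ℂ) := by rw [← Complex.ofReal_mul, s1]; push_cast; ring
  subst hE₁ hE₂ hE₃ hE₄ hE₅ hE₆ hE₇ hα₁ hα₂ hα₃ hα₄ hα₅ hα₆ hα₇ hF
  set a := Real.sqrt p with ha
  set b := Real.sqrt q with hb
  set c := Real.sqrt (1 - p - q) with hc
  have hFeq : ((starRingEnd ℂ) (a : ℂ)) • ((a : ℂ) • ketbra00)
      + (starRingEnd ℂ) (0:ℂ) • ((a : ℂ) • ketbra01)
      + (starRingEnd ℂ) (0:ℂ) • ((b : ℂ) • ketbra10)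
      + (starRingEnd ℂ) (0:ℂ) • ((b : ℂ) • ketbra11)
      + (starRingEnd ℂ) ((b : ℂ)) • (0 : Matrix (Fin 2) (Fin 2) ℂ)
      + (starRingEnd ℂ) ((c : ℂ)) • ((c : ℂ) • ketbra00)
      + (starRingEnd ℂ) (0:ℂ) • ((c : ℂ) • ketbra11)
      = ((1 : ℂ) - (q : ℂ)) • ketbra00 := by
    ext i j; fin_cases i <;> fin_cases j <;>
      simp [ketbra00, ketbra01, ketbra10, ketbra11, Complex.conj_ofReal] <;>
      linear_combination cp + c1
  refine ⟨⟨?_, ?_⟩, ?_, hFeq, ?_⟩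
  · ext i j; fin_cases i <;> fin_cases j <;>
      simp [ketbra00, ketbra01, ketbra10, ketbra11, Matrix.mul_apply,
        Fin.sum_univ_two, Matrix.one_apply, Complex.conj_ofReal] <;>
      linear_combination cp + cq + c1
  · have hna : 0 ≤ a := ha ▸ Real.sqrt_nonneg p
    have hnb : 0 ≤ b := hb ▸ Real.sqrt_nonneg q
    have hnc : 0 ≤ c := hc ▸ Real.sqrt_nonneg _
    simp only [Complex.norm_real, Real.norm_eq_abs, norm_zero,
      abs_of_nonneg hna, abs_of_nonneg hnb, abs_of_nonneg hnc,
      pow_two, sp, sq, s1]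
    ring
  · intro ρ
    ext i j; fin_cases i <;> fin_cases j <;>
      simp [ketbra00, ketbra01, ketbra10, ketbra11, Matrix.mul_apply,
        Matrix.vecMul, dotProduct, Matrix.conjTranspose_apply,
        Fin.sum_univ_two, Complex.conj_ofReal] <;>
      first
        | linear_combination (ρ 0 0 + ρ 1 1) * cp + ρ 0 0 * c1
        | linear_combination (ρ 0 0 + ρ 1 1) * cq + ρ 1 1 * c1
        | ring
  · rw [hFeq, norm_smul, ketbra00_norm, mul_one,
      show ((1:ℂ) - q) = ((1 - q : ℝ) : ℂ) by push_cast; ring,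
      Complex.norm_real, Real.norm_eq_abs, abs_of_nonneg (show (0:ℝ) ≤ 1 - q by linarith)]
end

section
/- Let α = (α₀, α₁) ∈ ℂ² be a unit vector and define F := |0⟩⟨α| = e₀ α† and G := |α⟩⟨0| = α e₀† in Matrix (Fin 2) (Fin 2) ℂ. Then: (i) F · G = |0⟩⟨0|, which has 1 as an eigenvalue; (ii) F has 1 as an eigenvalue if and only if α₀ = 1; and (iii) the operator norms satisfy ‖F‖ = ‖G‖ = 1 (F has singular value 1). -/
open Matrix
open scoped Matrix.Norms.L2Operator

/-- Appendix B of the paper. For a unit vector `α ∈ ℂ²`, the operators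
`F = |0⟩⟨α|` and `G = |α⟩⟨0|` satisfy: (i) `F * G = |0⟩⟨0|`, which has `1` as an
eigenvalue; (ii) `F` has `1` as an eigenvalue iff `α 0 = 1`; (iii) `‖F‖ = ‖G‖ = 1`
(operator norms; `F` has singular value `1`). -/
theorem repeater_restores_unit_eigenvalue
    (α : EuclideanSpace ℂ (Fin 2)) (hα : ‖α‖ = 1)
    (F G : Matrix (Fin 2) (Fin 2) ℂ)
    (hF : F = vecMulVec (![1, 0] : Fin 2 → ℂ) (star (α : Fin 2 → ℂ)))
    (hG : G = vecMulVec (α : Fin 2 → ℂ) (star (![1, 0] : Fin 2 → ℂ))) :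
    (F * G = ketbra00 ∧ Module.End.HasEigenvalue (Matrix.toEuclideanLin (F * G)) 1)
    ∧ (Module.End.HasEigenvalue (Matrix.toEuclideanLin F) 1 ↔ α 0 = 1)
    ∧ (‖F‖ = 1 ∧ ‖G‖ = 1) := by
  -- the normalization of α, written out in coordinates
  have hα' : (starRingEnd ℂ) (α 0) * α 0 + (starRingEnd ℂ) (α 1) * α 1 = 1 := by
    have h := inner_self_eq_norm_sq_to_K (𝕜 := ℂ) α
    rw [hα] at h
    rw [EuclideanSpace.inner_eq_star_dotProduct] at h
    simp [dotProduct, Fin.sum_univ_two] at h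
    linear_combination h
  -- (i) F * G = ketbra00
  have hFG : F * G = ketbra00 := by
    subst hF hG
    ext i j
    fin_cases i <;> fin_cases j <;>
      simp only [Matrix.mul_apply, vecMulVec_apply, Fin.sum_univ_two] <;>
      simp [ketbra00] <;>
      linear_combination hα'
  -- the candidate eigenvector |0⟩
  set e : EuclideanSpace ℂ (Fin 2) := (WithLp.equiv 2 (Fin 2 → ℂ)).symm ![1, 0] with he
  have he_ne : e ≠ 0 := by
    intro h
    have h1 : e 0 = 1 := rfl
    rw [h] at h1
    simp at h1
  have hk_eig : Module.End.HasEigenvalue (Matrix.toEuclideanLin (F * G)) 1 := by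
    apply Module.End.hasEigenvalue_of_hasEigenvector (x := e)
    refine ⟨Module.End.mem_eigenspace_iff.mpr ?_, he_ne⟩
    rw [he, WithLp.equiv_symm_apply, Matrix.toEuclideanLin_apply_piLp_toLp, hFG]
    rw [one_smul]
    congr 1
    funext i
    fin_cases i <;> simp [ketbra00, Matrix.mulVec, dotProduct, Fin.sum_univ_two]
  refine ⟨⟨hFG, hk_eig⟩, ?_, ?_⟩
  · -- (ii)
    constructor
    · intro h
      obtain ⟨v, hv⟩ := h.exists_hasEigenvector
      have hv1 : Matrix.toEuclideanLin F v = (1 : ℂ) • v :=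
        Module.End.mem_eigenspace_iff.mp hv.1
      have hmv : F *ᵥ (WithLp.equiv 2 (Fin 2 → ℂ) v) = WithLp.equiv 2 (Fin 2 → ℂ) v := by
        have := congrArg (WithLp.equiv 2 (Fin 2 → ℂ)) hv1
        simpa using this
      set w : Fin 2 → ℂ := WithLp.equiv 2 (Fin 2 → ℂ) v with hw
      have hw_ne : w ≠ 0 := by
        intro h0
        exact hv.2 ((WithLp.equiv 2 (Fin 2 → ℂ)).injective (by simpa [hw] using h0))
      have h1 : w 1 = 0 := by
        have := congrFun hmv 1
        simp [hF, Matrix.mulVec, dotProduct, vecMulVec_apply, Fin.sum_univ_two] at this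
        exact this.symm
      have h0 : (starRingEnd ℂ) (α 0) * w 0 = w 0 := by
        have := congrFun hmv 0
        simp [hF, Matrix.mulVec, dotProduct, vecMulVec_apply, Fin.sum_univ_two, h1] at this
        simpa [h1] using this
      have hw0 : w 0 ≠ 0 := by
        intro hz
        apply hw_ne
        funext i
        match i with
        | 0 => simpa using hz
        | 1 => simpa using h1
      have hc : (starRingEnd ℂ) (α 0) = 1 := by
        have h' : ((starRingEnd ℂ) (α 0) - 1) * w 0 = 0 := by linear_combination h0
        rcases mul_eq_zero.mp h' with h | h
        · exact sub_eq_zero.mp h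
        · exact absurd h hw0
      have := congrArg (starRingEnd ℂ) hc
      simpa using this
    · intro h0
      apply Module.End.hasEigenvalue_of_hasEigenvector (x := e)
      refine ⟨Module.End.mem_eigenspace_iff.mpr ?_, he_ne⟩
      rw [he, WithLp.equiv_symm_apply, Matrix.toEuclideanLin_apply_piLp_toLp]
      rw [one_smul]
      congr 1
      funext i
      fin_cases i <;>
        simp [hF, Matrix.mulVec, dotProduct, vecMulVec_apply, Fin.sum_univ_two, h0]
  · -- (iii)
    have hFH : Fᴴ = G := by
      subst hF hG
      ext i j
      fin_cases i <;> fin_cases j <;>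
        simp only [conjTranspose_apply, vecMulVec_apply] <;> simp
    have hGH : Gᴴ = F := by rw [← hFH, conjTranspose_conjTranspose]
    -- norm of ketbra00 is 1
    have hkH : ketbra00ᴴ = ketbra00 := by
      ext i j; fin_cases i <;> fin_cases j <;> simp [ketbra00]
    have hkk : ketbra00 * ketbra00 = ketbra00 := by
      ext i j; fin_cases i <;> fin_cases j <;>
        simp [ketbra00, Matrix.mul_apply, Fin.sum_univ_two]
    have hk_ne : (ketbra00 : Matrix (Fin 2) (Fin 2) ℂ) ≠ 0 := by
      intro h
      have := congrFun (congrFun h 0) 0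
      simp [ketbra00] at this
    have hknorm : ‖ketbra00‖ = 1 := by
      have h2 := Matrix.l2_opNorm_conjTranspose_mul_self ketbra00
      rw [hkH, hkk] at h2
      have hne : ‖ketbra00‖ ≠ 0 := norm_ne_zero_iff.mpr hk_ne
      have h3 : ‖ketbra00‖ * 1 = ‖ketbra00‖ * ‖ketbra00‖ := by rw [mul_one]; exact h2
      exact (mul_left_cancel₀ hne h3).symm
    have hGnorm : ‖G‖ = 1 := by
      have h2 := Matrix.l2_opNorm_conjTranspose_mul_self G
      rw [hGH, hFG, hknorm] at h2
      rcases mul_self_eq_one_iff.mp h2.symm with h | h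
      · exact h
      · linarith [norm_nonneg G]
    have hFnorm : ‖F‖ = 1 := by
      rw [← hGH, Matrix.l2_opNorm_conjTranspose, hGnorm]
    exact ⟨hFnorm, hGnorm⟩
end
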